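/- The magic state |0⟩ + e^{iπ/4}|1⟩, i.e. the 2×1 column vector (1, e^{iπ/4})ᵀ, does not belong to the Clifford+Triangle fragment: no matrix in the fragment of size 2×1 equals (1, e^{iπ/4})ᵀ. In particular, magic states cannot be constructed in the Clifford+Triangle fragment. -/

import Mathlib

noncomputable section

/-- Matrices of size `2^m × 2^n`, indexed by bit strings. -/
abbrev QMat (m n : ℕ) := Matrix (Fin m → Fin 2) (Fin n → Fin 2) ℂ

/-- The Hadamard matrix `(1/√2)[[1,1],[1,-1]]` as a `2×2` generator. -/
def hadM : QMat 1 1 :=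
  fun x y => if x 0 = 1 ∧ y 0 = 1 then -((Real.sqrt 2 : ℝ) : ℂ)⁻¹ else ((Real.sqrt 2 : ℝ) : ℂ)⁻¹

/-- The triangle matrix `[[1,1],[0,1]]` as a `2×2` generator. -/
def triM : QMat 1 1 :=
  fun x y => if x 0 = 1 ∧ y 0 = 0 then 0 else 1

/-- The swap matrix on `ℂ²⊗ℂ²`. -/
def swapM : QMat 2 2 :=
  fun x y => if x 0 = y 1 ∧ x 1 = y 0 then 1 else 0

/-- The Z-spider `Z_k^{m,n} = |0⟩^{⊗m}⟨0|^{⊗n} + i^k |1⟩^{⊗m}⟨1|^{⊗n}`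
(phase an integer multiple of π/2). -/
def zSpider (k : ℤ) (m n : ℕ) : QMat m n :=
  fun x y =>
    (if (∀ i, x i = 0) ∧ (∀ j, y j = 0) then 1 else 0) +
      Complex.I ^ k * (if (∀ i, x i = 1) ∧ (∀ j, y j = 1) then 1 else 0)

/-- Kronecker (tensor) product of matrices on qubit registers. -/
def kronM {m n p q : ℕ} (A : QMat m n) (B : QMat p q) : QMat (m + p) (n + q) :=
  fun x y =>
    A (fun i => x (Fin.castAdd p i)) (fun j => y (Fin.castAdd q j)) *
      B (fun i => x (Fin.natAdd m i)) (fun j => y (Fin.natAdd n j))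

/-- The Clifford+Triangle fragment: the smallest family of matrices containing the
Hadamard matrix, the triangle matrix, the swap matrix and all Z-spiders with phases
integer multiples of π/2, closed under composition and Kronecker product. -/
inductive CliffordTriangle : {m n : ℕ} → QMat m n → Prop
  | had : CliffordTriangle hadM
  | tri : CliffordTriangle triM
  | swap : CliffordTriangle swapM
  | zspider (k : ℤ) (m n : ℕ) : CliffordTriangle (zSpider k m n)
  | mul {m n p : ℕ} {A : QMat m n} {B : QMat n p} :
      CliffordTriangle A → CliffordTriangle B → CliffordTriangle (A * B)
  | kron {m n p q : ℕ} {A : QMat m n} {B : QMat p q} :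
      CliffordTriangle A → CliffordTriangle B → CliffordTriangle (kronM A B)

/-- The magic state `|0⟩ + e^{iπ/4}|1⟩`, i.e. the column vector `(1, e^{iπ/4})ᵀ`. -/
def magicState : QMat 1 0 :=
  fun x _ => if x 0 = 0 then 1 else Complex.exp ((Real.pi : ℂ) * Complex.I / 4)


def inK (z : ℂ) : Prop := ∃ a b : ℚ, z = (a : ℂ) + (b : ℂ) * Complex.I

def sq2 : ℂ := ((Real.sqrt 2 : ℝ) : ℂ)

def inSK (z : ℂ) : Prop := ∃ a b : ℚ, z = ((a : ℂ) + (b : ℂ) * Complex.I) * sq2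

lemma sq2_sq : sq2 * sq2 = 2 := by
  unfold sq2
  rw [← Complex.ofReal_mul]
  norm_num [Real.mul_self_sqrt]

lemma sq2_ne : sq2 ≠ 0 := by
  unfold sq2
  simp [Real.sqrt_eq_zero']

lemma inK_zero : inK 0 := ⟨0, 0, by simp⟩
lemma inK_one : inK 1 := ⟨1, 0, by simp⟩

lemma inK_add {x y : ℂ} (hx : inK x) (hy : inK y) : inK (x + y) := by
  obtain ⟨a, b, rfl⟩ := hx; obtain ⟨c, d, rfl⟩ := hy
  exact ⟨a + c, b + d, by push_cast; ring⟩

lemma inK_mul {x y : ℂ} (hx : inK x) (hy : inK y) : inK (x * y) := by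
  obtain ⟨a, b, rfl⟩ := hx; obtain ⟨c, d, rfl⟩ := hy
  refine ⟨a * c - b * d, a * d + b * c, ?_⟩
  have h : Complex.I * Complex.I = -1 := Complex.I_mul_I
  push_cast
  ring_nf
  rw [Complex.I_sq]
  ring

lemma inSK_zero : inSK 0 := ⟨0, 0, by simp⟩

lemma inSK_add {x y : ℂ} (hx : inSK x) (hy : inSK y) : inSK (x + y) := by
  obtain ⟨a, b, rfl⟩ := hx; obtain ⟨c, d, rfl⟩ := hy
  exact ⟨a + c, b + d, by push_cast; ring⟩

lemma inSK_of_K_SK {x y : ℂ} (hx : inK x) (hy : inSK y) : inSK (x * y) := by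
  obtain ⟨c, d, rfl⟩ := hy
  obtain ⟨e, f, he⟩ := inK_mul hx ⟨c, d, rfl⟩
  exact ⟨e, f, by rw [← mul_assoc, he]⟩

lemma inSK_of_SK_K {x y : ℂ} (hx : inSK x) (hy : inK y) : inSK (x * y) := by
  rw [mul_comm]; exact inSK_of_K_SK hy hx

lemma inK_of_SK_SK {x y : ℂ} (hx : inSK x) (hy : inSK y) : inK (x * y) := by
  obtain ⟨a, b, rfl⟩ := hx; obtain ⟨c, d, rfl⟩ := hy
  have : ((a : ℂ) + b * Complex.I) * sq2 * (((c : ℂ) + d * Complex.I) * sq2)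
      = ((a : ℂ) + b * Complex.I) * ((c : ℂ) + d * Complex.I) * 2 := by
    rw [show ((a : ℂ) + b * Complex.I) * sq2 * (((c : ℂ) + d * Complex.I) * sq2)
        = ((a : ℂ) + b * Complex.I) * ((c : ℂ) + d * Complex.I) * (sq2 * sq2) by ring, sq2_sq]
  rw [this]
  exact inK_mul (inK_mul ⟨a, b, rfl⟩ ⟨c, d, rfl⟩) ⟨2, 0, by simp⟩

lemma inK_I_zpow (k : ℤ) : inK (Complex.I ^ k) := by
  have h4 : Complex.I ^ (4 : ℤ) = 1 := by
    rw [show (4:ℤ) = ((4:ℕ):ℤ) from rfl, zpow_natCast]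
    exact Complex.I_pow_four
  have key : Complex.I ^ k = Complex.I ^ (k % 4) := by
    conv_lhs => rw [← Int.emod_add_mul_ediv k 4]
    rw [zpow_add₀ Complex.I_ne_zero, zpow_mul, h4, one_zpow, mul_one]
  rw [key]
  have h : k % 4 = 0 ∨ k % 4 = 1 ∨ k % 4 = 2 ∨ k % 4 = 3 := by omega
  rcases h with h | h | h | h <;> rw [h]
  · exact ⟨1, 0, by norm_num⟩
  · exact ⟨0, 1, by norm_num⟩
  · refine ⟨-1, 0, ?_⟩
    rw [show (2:ℤ) = (2:ℕ) by norm_num, zpow_natCast, Complex.I_sq]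
    push_cast; ring
  · refine ⟨0, -1, ?_⟩
    rw [show (3:ℤ) = (3:ℕ) by norm_num, zpow_natCast, pow_succ, Complex.I_sq]
    push_cast; ring


lemma inK_sum {ι : Type*} (t : Finset ι) (f : ι → ℂ) (h : ∀ i ∈ t, inK (f i)) :
    inK (∑ i ∈ t, f i) := by
  classical
  induction t using Finset.induction_on with
  | empty => simpa using inK_zero
  | insert _ _ hx ih =>
    rw [Finset.sum_insert hx]
    exact inK_add (h _ (Finset.mem_insert_self _ _))
      (ih fun i hi => h i (Finset.mem_insert_of_mem hi))

lemma inSK_sum {ι : Type*} (t : Finset ι) (f : ι → ℂ) (h : ∀ i ∈ t, inSK (f i)) :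
    inSK (∑ i ∈ t, f i) := by
  classical
  induction t using Finset.induction_on with
  | empty => simpa using inSK_zero
  | insert _ _ hx ih =>
    rw [Finset.sum_insert hx]
    exact inSK_add (h _ (Finset.mem_insert_self _ _))
      (ih fun i hi => h i (Finset.mem_insert_of_mem hi))

lemma inK_ite {P : Prop} [Decidable P] : inK (if P then 1 else 0) := by
  split
  · exact inK_one
  · exact inK_zero

lemma cliffordTriangle_invariant {m n : ℕ} {M : QMat m n} (h : CliffordTriangle M) :
    (∀ x y, inK (M x y)) ∨ (∀ x y, inSK (M x y)) := by
  induction h with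
  | had =>
    right
    intro x y
    have hval : ∀ e : ℚ, ((e : ℂ) + (0 : ℚ) * Complex.I) * sq2 = e * sq2 := by
      intro e; push_cast; ring
    have hinv : sq2⁻¹ = ((1/2 : ℚ) : ℂ) * sq2 := by
      field_simp
      rw [div_eq_iff sq2_ne]
      push_cast
      linear_combination (-(1/2:ℂ)) * sq2_sq
    unfold hadM
    split
    · refine ⟨-(1/2), 0, ?_⟩
      rw [hval]
      show -(sq2⁻¹) = ((-(1/2) : ℚ) : ℂ) * sq2
      rw [hinv]
      push_cast
      ring
    · refine ⟨1/2, 0, ?_⟩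
      rw [hval]
      exact hinv
  | tri =>
    left; intro x y; unfold triM; split
    · exact inK_zero
    · exact inK_one
  | swap =>
    left; intro x y; unfold swapM; exact inK_ite
  | zspider k m n =>
    left; intro x y; unfold zSpider
    exact inK_add inK_ite (inK_mul (inK_I_zpow k) inK_ite)
  | mul hA hB ihA ihB =>
    rcases ihA with hA' | hA' <;> rcases ihB with hB' | hB'
    · left; intro x y; rw [Matrix.mul_apply]
      exact inK_sum _ _ fun z _ => inK_mul (hA' x z) (hB' z y)
    · right; intro x y; rw [Matrix.mul_apply]
      exact inSK_sum _ _ fun z _ => inSK_of_K_SK (hA' x z) (hB' z y)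
    · right; intro x y; rw [Matrix.mul_apply]
      exact inSK_sum _ _ fun z _ => inSK_of_SK_K (hA' x z) (hB' z y)
    · left; intro x y; rw [Matrix.mul_apply]
      exact inK_sum _ _ fun z _ => inK_of_SK_SK (hA' x z) (hB' z y)
  | kron hA hB ihA ihB =>
    rcases ihA with hA' | hA' <;> rcases ihB with hB' | hB'
    · left; intro x y; exact inK_mul (hA' _ _) (hB' _ _)
    · right; intro x y; exact inSK_of_K_SK (hA' _ _) (hB' _ _)
    · right; intro x y; exact inSK_of_SK_K (hA' _ _) (hB' _ _)
    · left; intro x y; exact inK_of_SK_SK (hA' _ _) (hB' _ _)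

lemma exp_pi_div_four : Complex.exp ((Real.pi : ℂ) * Complex.I / 4)
    = ((Real.sqrt 2 / 2 : ℝ) : ℂ) + ((Real.sqrt 2 / 2 : ℝ) : ℂ) * Complex.I := by
  have h : (Real.pi : ℂ) * Complex.I / 4 = ((Real.pi / 4 : ℝ) : ℂ) * Complex.I := by
    push_cast; ring
  rw [h, Complex.exp_mul_I, ← Complex.ofReal_cos, ← Complex.ofReal_sin,
    Real.cos_pi_div_four, Real.sin_pi_div_four]

lemma not_inK_exp : ¬ inK (Complex.exp ((Real.pi : ℂ) * Complex.I / 4)) := by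
  rintro ⟨a, b, hab⟩
  rw [exp_pi_div_four] at hab
  have hre : Real.sqrt 2 / 2 = (a : ℝ) := by
    have := congrArg Complex.re hab
    simpa using this
  have : Real.sqrt 2 = ((2 * a : ℚ) : ℝ) := by push_cast; linarith
  exact irrational_sqrt_two ⟨2 * a, this.symm⟩

lemma not_inSK_one : ¬ inSK 1 := by
  rintro ⟨a, b, hab⟩
  have hre : (1 : ℝ) = (a : ℝ) * Real.sqrt 2 := by
    have := congrArg Complex.re hab
    simpa [sq2] using this
  have ha : (a : ℝ) ≠ 0 := by
    intro h; rw [h] at hre; norm_num at hre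
  have : Real.sqrt 2 = ((a⁻¹ : ℚ) : ℝ) := by
    push_cast
    field_simp at hre ⊢
    linarith
  exact irrational_sqrt_two ⟨a⁻¹, this.symm⟩

/-- Magic states cannot be constructed in the Clifford+Triangle fragment. -/
theorem magicState_not_cliffordTriangle :
    ∀ M : QMat 1 0, CliffordTriangle M → M ≠ magicState := by
  intro M h heq
  subst heq
  rcases cliffordTriangle_invariant h with hK | hS
  · have h1 := hK (fun _ => 1) (fun j => j.elim0)
    simp only [magicState] at h1
    norm_num at h1
    exact not_inK_exp h1
  · have h1 := hS (fun _ => 0) (fun j => j.elim0)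
    simp only [magicState] at h1
    norm_num at h1
    exact not_inSK_one h1

end
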